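/- arXiv:1509.06274 — 3 statements merged into one kernel-verified Lean document; each statement's English description precedes it below -/
import Mathlib

section
/- Let A, B be self-adjoint operators on a Hilbert space H with A invertible, and let λ_1,...,λ_n be eigenvalues of A such that λ = λ_1⋯λ_n is an isolated eigenvalue of multiplicity 1 of ∧^n A. Suppose v = e_1 ∧ ... ∧ e_n (with e_i unit eigenvectors of A of eigenvalues λ_i) is a common eigenvector of ∧^n A and ∧^n B, with (∧^n B)v = a·v for some a ≠ 0. Then span(e_1,...,e_n) is invariant under B. -/
/-!
Put `Y = (⟪e i, B e j⟫)`. The Gram identity for `ω` gives `det Y = ⟪ω e, ω (B ∘ e)⟫ = a ≠ 0`.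
For `y ⟂ span e`, replacing row `j` of `Y` by `(⟪y, B e k⟫)ₖ` yields the Gram matrix of
`(update e j y, B ∘ e)`, whose determinant is `a` times that of the Gram matrix of
`(update e j y, e)`, and the latter has a zero row. By Cramer's rule the row `(⟪y, B e k⟫)ₖ`
vanishes, so every `B e k` lies in `(span e)ᗮᗮ = span e`.
-/

namespace Matrix

theorem eq_zero_of_det_updateRow_eq_zero {R ι : Type*} [CommRing R] [IsDomain R]
    [Fintype ι] [DecidableEq ι] {Y : Matrix ι ι R} (hY : Y.det ≠ 0) {w : ι → R}
    (hw : ∀ j, (Y.updateRow j w).det = 0) : w = 0 := by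
  have hcramer : Yᵀ.cramer w = 0 := funext fun j => (cramer_transpose_apply Y w j).trans (hw j)
  have hmulVec := mulVec_cramer Yᵀ w
  rw [hcramer, mulVec_zero, det_transpose] at hmulVec
  exact (smul_eq_zero.mp hmulVec.symm).resolve_left hY

end Matrix

namespace AlternatingMap

open Matrix

variable {𝕜 H W : Type*} [RCLike 𝕜] [NormedAddCommGroup H] [InnerProductSpace 𝕜 H]
  [NormedAddCommGroup W] [InnerProductSpace 𝕜 W] {n : ℕ}

def InnerEqDetGram (ω : AlternatingMap 𝕜 H W (Fin n)) : Prop :=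
  ∀ x y : Fin n → H, (inner 𝕜 (ω x) (ω y) : 𝕜) = det (of fun i j => (inner 𝕜 (x i) (y j) : 𝕜))

variable {ω : AlternatingMap 𝕜 H W (Fin n)} {e f : Fin n → H} {a : 𝕜}

theorem InnerEqDetGram.det_inner_eq (hω : ω.InnerEqDetGram) (he : Orthonormal 𝕜 e)
    (hf : ω f = a • ω e) : det (of fun i j => (inner 𝕜 (e i) (f j) : 𝕜)) = a := by
  have hGram_e : (of fun i j => (inner 𝕜 (e i) (e j) : 𝕜)) = 1 := by
    ext i j
    simp [one_apply, orthonormal_iff_ite.mp he i j]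
  rw [← hω, hf, inner_smul_right, hω, hGram_e, det_one, mul_one]

theorem InnerEqDetGram.det_updateRow_inner_eq_zero (hω : ω.InnerEqDetGram)
    (hf : ω f = a • ω e) {y : H} (hy : ∀ k, inner 𝕜 y (e k) = (0 : 𝕜)) (j : Fin n) :
    det ((of fun i k => (inner 𝕜 (e i) (f k) : 𝕜)).updateRow j fun k => inner 𝕜 y (f k)) = 0 := by
  have hrow : (of fun i k => (inner 𝕜 (e i) (f k) : 𝕜)).updateRow j (fun k => inner 𝕜 y (f k))
      = of fun i k => (inner 𝕜 (Function.update e j y i) (f k) : 𝕜) := by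
    ext i k
    rcases eq_or_ne i j with rfl | hij
    · simp
    · simp [updateRow_ne hij, Function.update_of_ne hij]
  have hzero : det (of fun i k => (inner 𝕜 (Function.update e j y i) (e k) : 𝕜)) = 0 :=
    det_eq_zero_of_row_eq_zero j fun k => by simp [hy k]
  rw [hrow, ← hω, hf, inner_smul_right, hω, hzero, mul_zero]

theorem InnerEqDetGram.inner_eq_zero (hω : ω.InnerEqDetGram) (he : Orthonormal 𝕜 e)
    (ha : a ≠ 0) (hf : ω f = a • ω e) {y : H} (hy : ∀ k, inner 𝕜 y (e k) = (0 : 𝕜))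
    (k : Fin n) : inner 𝕜 y (f k) = (0 : 𝕜) :=
  congrFun (eq_zero_of_det_updateRow_eq_zero ((hω.det_inner_eq he hf).symm ▸ ha)
    (hω.det_updateRow_inner_eq_zero hf hy)) k

theorem InnerEqDetGram.mem_span (hω : ω.InnerEqDetGram) (he : Orthonormal 𝕜 e) (ha : a ≠ 0)
    (hf : ω f = a • ω e) (k : Fin n) : f k ∈ Submodule.span 𝕜 (Set.range e) := by
  set K := Submodule.span 𝕜 (Set.range e)
  have : FiniteDimensional 𝕜 K := FiniteDimensional.span_of_finite 𝕜 (Set.finite_range e)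
  rw [← K.orthogonal_orthogonal, Submodule.mem_orthogonal]
  intro y hy
  refine hω.inner_eq_zero he ha hf (fun i => ?_) k
  exact inner_eq_zero_symm.mp (hy (e i) (Submodule.subset_span ⟨i, rfl⟩))

end AlternatingMap

theorem span_invariant_of_wedge_eigenvector_general
    {H W : Type*} [NormedAddCommGroup H] [InnerProductSpace ℂ H]
    [NormedAddCommGroup W] [InnerProductSpace ℂ W]
    (B : H →L[ℂ] H)
    {n : ℕ} (e : Fin n → H) (he : Orthonormal ℂ e)
    (ω : AlternatingMap ℂ H W (Fin n))
    (hGram : ∀ x y : Fin n → H,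
      (inner ℂ (ω x) (ω y) : ℂ) = Matrix.det (Matrix.of fun i j => (inner ℂ (x i) (y j) : ℂ)))
    (BW : W →L[ℂ] W)
    (hBW : ∀ v : Fin n → H, BW (ω v) = ω (fun i => B (v i)))
    (a : ℂ) (ha : a ≠ 0) (hBv : BW (ω e) = a • ω e) :
    ∀ x ∈ Submodule.span ℂ (Set.range e), B x ∈ Submodule.span ℂ (Set.range e) := by
  have hBe : ∀ k, B (e k) ∈ Submodule.span ℂ (Set.range e) :=
    AlternatingMap.InnerEqDetGram.mem_span (f := fun i => B (e i)) hGram he ha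
      (by rw [← hBW, hBv])
  have hle : Submodule.span ℂ (Set.range e) ≤
      (Submodule.span ℂ (Set.range e)).comap (B : H →ₗ[ℂ] H) :=
    Submodule.span_le.mpr (Set.range_subset_iff.mpr hBe)
  exact fun x hx => hle hx

/-- Let `A, B` be self-adjoint bounded operators on a Hilbert space `H` with `A`
invertible, and let `lam 1, ..., lam n` be eigenvalues of `A` with orthonormal
unit eigenvectors `e 1, ..., e n`, such that `lam = lam 1 * ... * lam n` is an
isolated eigenvalue of multiplicity `1` of `∧ⁿA` (the operator `AW` induced on a
model `W` of the exterior power `⋀ⁿH`).  Suppose `v = e 1 ∧ ... ∧ e n = ω e` is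
a common eigenvector of `∧ⁿA` and `∧ⁿB`, with `(∧ⁿB) v = a • v` for some
`a ≠ 0`.  Then `span (e 1, ..., e n)` is invariant under `B`.  (Here `H` is of
the class `𝓔(H)`: the eigenvectors of `A` span a dense subspace of `H`.) -/
theorem span_invariant_of_wedge_eigenvector
    {H W : Type*} [NormedAddCommGroup H] [InnerProductSpace ℂ H] [CompleteSpace H]
    [NormedAddCommGroup W] [InnerProductSpace ℂ W]
    (A B : H →L[ℂ] H) (hA : IsSelfAdjoint A) (hB : IsSelfAdjoint B)
    (hAinv : IsUnit A)
    (hbasis : Dense ((Submodule.span ℂ {x : H | ∃ c : ℂ, A x = c • x} : Submodule ℂ H) : Set H))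
    {n : ℕ} (e : Fin n → H) (he : Orthonormal ℂ e)
    (lam : Fin n → ℂ) (heig : ∀ i, A (e i) = lam i • e i)
    (ω : AlternatingMap ℂ H W (Fin n))
    (hGram : ∀ x y : Fin n → H,
      (inner ℂ (ω x) (ω y) : ℂ) = Matrix.det (Matrix.of fun i j => (inner ℂ (x i) (y j) : ℂ)))
    (AW BW : W →L[ℂ] W)
    (hAW : ∀ v : Fin n → H, AW (ω v) = ω (fun i => A (v i)))
    (hBW : ∀ v : Fin n → H, BW (ω v) = ω (fun i => B (v i)))
    (hisol : ∃ U : Set ℂ, IsOpen U ∧ U ∩ spectrum ℂ AW = {∏ i, lam i})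
    (hmult : ∀ w : W, AW w = (∏ i, lam i) • w → ∃ c : ℂ, w = c • ω e)
    (a : ℂ) (ha : a ≠ 0) (hBv : BW (ω e) = a • ω e) :
    ∀ x ∈ Submodule.span ℂ (Set.range e), B x ∈ Submodule.span ℂ (Set.range e) :=
  span_invariant_of_wedge_eigenvector_general B e he ω hGram BW hBW a ha hBv
end

section
/- Let A_1, A_2 be bounded self-adjoint operators on a separable Hilbert space, suppose 1 is an isolated eigenvalue of A_1, and suppose that in some polydisk around (1,0) the proper joint spectrum σ_p(A_1,A_2) coincides with the line {x + y = 1}. Let P_1 be the orthogonal projection onto the eigenspace of A_1 for eigenvalue 1. Then P_1 A_2 P_1 = P_1. -/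
/-!
For small real `t` the line condition says that the spectrum of the self-adjoint operator
`S_t = A₁ + t A₂ - (1 + t)` meets a disk of radius `δ` around `0`, with `δ` independent of `t`,
at most in `0`. For a self-adjoint `S` with such a gap, the functional calculus gives
`S² ∓ δ S ≥ 0`, i.e. `δ |⟪S v, v⟫| ≤ ‖S v‖²`. On an eigenvector `u` of `A₁` for `1` we have
`S_t u = t (A₂ u - u)`, so `δ |⟪A₂ u - u, u⟫| ≤ t ‖A₂ u - u‖²` for all small `t > 0`, whence
`⟪A₂ u, u⟫ = ⟪u, u⟫`. By polarization the form of `P A₂ P - P` vanishes, so `P A₂ P = P`.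
-/

open scoped InnerProductSpace
open Filter Topology

theorem eventually_mem_spectrum_pencil_imp_eq_zero {A : Type*} [Ring A] [Algebra ℂ A] {a b : A}
    (hline : ∀ᶠ p : ℂ × ℂ in 𝓝 (1, 0), ¬IsUnit (p.1 • a + p.2 • b - 1) → p.1 + p.2 = 1) :
    ∀ᶠ p : ℂ × ℂ in 𝓝 0,
      p.2 ∈ spectrum ℂ (a + p.1 • b - algebraMap ℂ A (1 + p.1)) → p.2 = 0 := by
  have hne : ∀ᶠ p : ℂ × ℂ in 𝓝 0, 1 + p.1 + p.2 ≠ 0 :=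
    (by fun_prop : Continuous fun p : ℂ × ℂ => 1 + p.1 + p.2).continuousAt.eventually_ne
      (by simp)
  -- `(x, y) = ((1 + t + z)⁻¹, t (1 + t + z)⁻¹)` rescales `z - S_t` to `x a + y b - 1`.
  have htend : Tendsto (fun p : ℂ × ℂ => ((1 + p.1 + p.2)⁻¹, p.1 * (1 + p.1 + p.2)⁻¹))
      (𝓝 0) (𝓝 (1, 0)) := by
    have : ContinuousAt (fun p : ℂ × ℂ => ((1 + p.1 + p.2)⁻¹, p.1 * (1 + p.1 + p.2)⁻¹)) 0 := by
      fun_prop (disch := simp)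
    simpa using this.tendsto
  filter_upwards [hne, htend.eventually hline] with ⟨t, z⟩ hd hl hz
  dsimp only at hl hz ⊢
  set d := 1 + t + z
  have hfactor : algebraMap ℂ A z - (a + t • b - algebraMap ℂ A (1 + t)) =
      algebraMap ℂ A (-d) * (d⁻¹ • a + (t * d⁻¹) • b - 1) := by
    simp only [mul_sub, mul_add, ← Algebra.smul_def, smul_smul, mul_one]
    rw [neg_mul, neg_mul, mul_inv_cancel₀ hd, mul_comm t, mul_inv_cancel_left₀ hd]
    simp only [d, map_add, map_neg, neg_smul, one_smul]
    abel
  have hsum := hl fun hu => (spectrum.mem_iff.mp hz) <| by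
    rw [hfactor]
    exact ((isUnit_iff_ne_zero.mpr (neg_ne_zero.mpr hd)).map _).mul hu
  have hd_eq : (1 + t) * d⁻¹ = 1 := by linear_combination hsum
  rw [mul_inv_eq_one₀ hd] at hd_eq
  linear_combination -hd_eq

section HilbertSpace

variable {H : Type*} [NormedAddCommGroup H] [InnerProductSpace ℂ H] [CompleteSpace H]

theorem IsSelfAdjoint.mul_re_inner_le_norm_sq {S : H →L[ℂ] H} (hS : IsSelfAdjoint S) {c : ℝ}
    (hc : ∀ x ∈ spectrum ℝ S, 0 ≤ x * (x - c)) (v : H) :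
    c * RCLike.re ⟪S v, v⟫_ℂ ≤ ‖S v‖ ^ 2 := by
  have hpos : 0 ≤ S * (S - algebraMap ℝ _ c) := by
    have h := cfc_nonneg hc
    rwa [cfc_mul (fun x => x) (fun x => x - c) S, cfc_sub (fun x => x) (fun _ => c) S,
      cfc_id' ℝ S hS, cfc_const c S hS] at h
  have h := ((ContinuousLinearMap.nonneg_iff_isPositive _).mp hpos).re_inner_nonneg_left v
  rwa [ContinuousLinearMap.mul_def, ContinuousLinearMap.comp_apply, hS.isSymmetric.apply_clm,
    sub_apply, inner_sub_left, map_sub, sub_nonneg, inner_self_eq_norm_sq,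
    ContinuousLinearMap.algebraMap_apply, RCLike.real_smul_eq_coe_smul (K := ℂ),
    inner_smul_real_left, RCLike.smul_re, inner_re_symm] at h

theorem IsSelfAdjoint.mul_norm_inner_le_norm_sq {S : H →L[ℂ] H} (hS : IsSelfAdjoint S) {δ : ℝ}
    (hgap : ∀ z ∈ spectrum ℂ S, ‖z‖ < δ → z = 0) (v : H) :
    δ * ‖⟪S v, v⟫_ℂ‖ ≤ ‖S v‖ ^ 2 := by
  obtain hδ | hδ := le_or_gt δ 0
  · exact (mul_nonpos_of_nonpos_of_nonneg hδ (norm_nonneg _)).trans (by positivity)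
  have hbound (c : ℝ) (hc : |c| ≤ δ) : c * RCLike.re ⟪S v, v⟫_ℂ ≤ ‖S v‖ ^ 2 := by
    refine hS.mul_re_inner_le_norm_sq (fun x hx => ?_) v
    by_cases hxδ : |x| < δ
    · have hx0 := hgap x (spectrum.algebraMap_mem ℂ hx) (by simpa using hxδ)
      simp_all
    · have := abs_le.mp hc
      rcases le_total 0 x with h | h
      · rw [abs_of_nonneg h] at hxδ; nlinarith
      · rw [abs_of_nonpos h] at hxδ; nlinarith
  have hreal : (RCLike.re ⟪S v, v⟫_ℂ : ℂ) = ⟪S v, v⟫_ℂ :=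
    hS.isSymmetric.coe_reApplyInnerSelf_apply v
  rw [← hreal, Complex.norm_real, Real.norm_eq_abs]
  rcases abs_cases (RCLike.re ⟪S v, v⟫_ℂ) with ⟨h, -⟩ | ⟨h, -⟩ <;> rw [h]
  · exact hbound δ (abs_of_pos hδ).le
  · simpa using hbound (-δ) (by rw [abs_neg, abs_of_pos hδ])

theorem inner_apply_eq_inner_self_of_pencil_gap {A₁ A₂ : H →L[ℂ] H} (hA₁ : IsSelfAdjoint A₁)
    (hA₂ : IsSelfAdjoint A₂)
    (hgap : ∀ᶠ p : ℂ × ℂ in 𝓝 0,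
      p.2 ∈ spectrum ℂ (A₁ + p.1 • A₂ - algebraMap ℂ _ (1 + p.1)) → p.2 = 0)
    {u : H} (hu : A₁ u = u) : ⟪A₂ u, u⟫_ℂ = ⟪u, u⟫_ℂ := by
  obtain ⟨δ, hδ, hδgap⟩ := Metric.eventually_nhds_iff.mp hgap
  set w := A₂ u - u
  have hbound : ∀ t ∈ Set.Ioo (0 : ℝ) δ, δ * ‖⟪w, u⟫_ℂ‖ ≤ t * ‖w‖ ^ 2 := by
    rintro t ⟨ht0, htδ⟩
    have ht : IsSelfAdjoint (t : ℂ) := Complex.conj_ofReal t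
    set S := A₁ + (t : ℂ) • A₂ - algebraMap ℂ _ (1 + t)
    have hS : IsSelfAdjoint S :=
      (hA₁.add (ht.smul hA₂)).sub (.algebraMap _ (IsSelfAdjoint.one ℂ |>.add ht))
    have hSu : S u = (t : ℂ) • w := by
      simp only [S, w, sub_apply, add_apply, smul_apply, hu, ContinuousLinearMap.algebraMap_apply,
        smul_sub, add_smul, one_smul]
      abel
    have hgapS : ∀ z ∈ spectrum ℂ S, ‖z‖ < δ → z = 0 := fun z hz hzδ =>
      hδgap (y := ((t : ℂ), z)) (by simpa [Prod.dist_eq, abs_of_pos ht0] using ⟨htδ, hzδ⟩) hz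
    have := hS.mul_norm_inner_le_norm_sq hgapS u
    rw [hSu, inner_smul_left, norm_mul, norm_smul, Complex.norm_conj, Complex.norm_real,
      Real.norm_of_nonneg ht0.le] at this
    nlinarith
  have hlim : Tendsto (fun t : ℝ => t * ‖w‖ ^ 2) (𝓝[>] 0) (𝓝 0) := by
    simpa using ((tendsto_id (x := 𝓝 (0 : ℝ))).mul_const (‖w‖ ^ 2)).mono_left nhdsWithin_le_nhds
  have hle := ge_of_tendsto hlim (eventually_of_mem (Ioo_mem_nhdsGT hδ) hbound)
  have hwu : ⟪w, u⟫_ℂ = 0 := by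
    rw [← norm_eq_zero]
    nlinarith [norm_nonneg ⟪w, u⟫_ℂ]
  rwa [inner_sub_left, sub_eq_zero] at hwu

theorem comp_comp_eq_self_of_inner_apply_range {P B : H →L[ℂ] H} (hPidem : P ∘L P = P)
    (hPsa : IsSelfAdjoint P) (hB : ∀ x, ⟪B (P x), P x⟫_ℂ = ⟪P x, P x⟫_ℂ) :
    P ∘L B ∘L P = P := by
  have hP (x y : H) : ⟪P x, y⟫_ℂ = ⟪x, P y⟫_ℂ := hPsa.isSymmetric.apply_clm x y
  have hform (x : H) : ⟪(P ∘L B ∘L P - P) x, x⟫_ℂ = 0 := by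
    have hPPx : P (P x) = P x := congrArg (· x) hPidem
    rw [sub_apply, inner_sub_left, ContinuousLinearMap.comp_apply,
      ContinuousLinearMap.comp_apply, hP, hB, ← hP, hPPx, sub_self]
  have hzero := (inner_map_self_eq_zero ((P ∘L B ∘L P - P : H →L[ℂ] H) : H →ₗ[ℂ] H)).mp hform
  exact sub_eq_zero.mp (ContinuousLinearMap.coe_injective hzero)

end HilbertSpace

theorem residue_line_in_spectrum_general
    {H : Type*} [NormedAddCommGroup H] [InnerProductSpace ℂ H] [CompleteSpace H]
    (A₁ A₂ : H →L[ℂ] H) (hA₁ : IsSelfAdjoint A₁) (hA₂ : IsSelfAdjoint A₂)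
    (hline : ∃ ρ : ℝ, 0 < ρ ∧ ∀ x y : ℂ, ‖x - 1‖ < ρ → ‖y‖ < ρ →
      (¬ IsUnit (x • A₁ + y • A₂ - 1) ↔ x + y = 1))
    (P : H →L[ℂ] H) (hPidem : P ∘L P = P) (hPsa : IsSelfAdjoint P)
    (hPran : LinearMap.range (P : H →ₗ[ℂ] H) = LinearMap.ker ((A₁ - 1 : H →L[ℂ] H) : H →ₗ[ℂ] H)) :
    P ∘L A₂ ∘L P = P := by
  obtain ⟨ρ, hρ, hline⟩ := hline
  have hnear : ∀ᶠ p : ℂ × ℂ in 𝓝 (1, 0), ¬IsUnit (p.1 • A₁ + p.2 • A₂ - 1) → p.1 + p.2 = 1 :=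
    Metric.eventually_nhds_iff.mpr ⟨ρ, hρ, fun p hp => by
      rw [Prod.dist_eq, max_lt_iff, dist_eq_norm, dist_zero_right] at hp
      exact (hline p.1 p.2 hp.1 hp.2).mp⟩
  have heigen (x : H) : A₁ (P x) = P x := by
    have hx : P x ∈ LinearMap.ker ((A₁ - 1 : H →L[ℂ] H) : H →ₗ[ℂ] H) :=
      hPran ▸ LinearMap.mem_range_self _ x
    simpa [sub_eq_zero] using hx
  exact comp_comp_eq_self_of_inner_apply_range hPidem hPsa fun x =>
    inner_apply_eq_inner_self_of_pencil_gap hA₁ hA₂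
      (eventually_mem_spectrum_pencil_imp_eq_zero hnear) (heigen x)

/-- Let `A₁, A₂` be bounded self-adjoint operators on a separable Hilbert space,
let `1` be an isolated eigenvalue of `A₁`, and suppose that in some polydisk
around `(1,0)` the proper joint spectrum `σ_p(A₁,A₂)` coincides with the line
`{x + y = 1}`.  If `P` is the orthogonal projection onto the eigenspace
`ker (A₁ - I)` (i.e. a self-adjoint idempotent with range `ker (A₁ - I)`), then
`P A₂ P = P`. -/
theorem residue_line_in_spectrum
    {H : Type*} [NormedAddCommGroup H] [InnerProductSpace ℂ H] [CompleteSpace H]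
    [TopologicalSpace.SeparableSpace H]
    (A₁ A₂ : H →L[ℂ] H) (hA₁ : IsSelfAdjoint A₁) (hA₂ : IsSelfAdjoint A₂)
    (heig : LinearMap.ker ((A₁ - 1 : H →L[ℂ] H) : H →ₗ[ℂ] H) ≠ ⊥)
    (hisol : ∃ U : Set ℂ, IsOpen U ∧ U ∩ spectrum ℂ A₁ = {1})
    (hline : ∃ ρ : ℝ, 0 < ρ ∧ ∀ x y : ℂ, ‖x - 1‖ < ρ → ‖y‖ < ρ →
      (¬ IsUnit (x • A₁ + y • A₂ - 1) ↔ x + y = 1))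
    (P : H →L[ℂ] H) (hPidem : P ∘L P = P) (hPsa : IsSelfAdjoint P)
    (hPran : LinearMap.range (P : H →ₗ[ℂ] H) = LinearMap.ker ((A₁ - 1 : H →L[ℂ] H) : H →ₗ[ℂ] H)) :
    P ∘L A₂ ∘L P = P :=
  residue_line_in_spectrum_general A₁ A₂ hA₁ hA₂ hline P hPidem hPsa hPran
end

section
/- Let A_1, A_2 be bounded self-adjoint operators with A_1 invertible and 1 an isolated eigenvalue of A_1. Let P_1 be the orthogonal projection onto ker(A_1 − I), E the spectral measure of A_1, T = ∫_{σ(A_1)∖{1}} (z−1)^{−1} dE(z), and T̃ = ∫_{σ(A_1)∖{1}} z(1−z)^{−1} dE(z). If P_1 A_2 T A_2 P_1 = 0 and P_1 A_2 T̃ A_2 P_1 = 0, then the eigenspace ker(A_1 − I) is invariant under A_2. -/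
/-!
The two reduced resolvents add up to `P - 1`: the sum `X = T + T' + (1 - P)` satisfies
`(A₁ - 1) X = 0` and `P X = 0`, and the range of `X` lies in `ker (A₁ - 1) = range P`.
Adding the two vanishing conditions therefore gives `P A₂ (1 - P) A₂ P = 0`, which is
`x⋆ x = 0` for `x = (1 - P) A₂ P`. Hence `A₂ P = P A₂ P`.
-/

theorem ContinuousLinearMap.mul_eq_self_of_range_eq_ker {R M : Type*} [Semiring R]
    [TopologicalSpace M] [AddCommMonoid M] [Module R M] {P K X : M →L[R] M}
    (hP : IsIdempotentElem P)
    (hran : LinearMap.range (P : M →ₗ[R] M) = LinearMap.ker (K : M →ₗ[R] M))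
    (hKX : K * X = 0) : P * X = X := by
  ext x
  have hx : X x ∈ LinearMap.range (P : M →ₗ[R] M) := by
    rw [hran, LinearMap.mem_ker]
    exact congr($hKX x)
  exact (LinearMap.IsIdempotentElem.mem_range_iff (IsIdempotentElem.toLinearMap hP)).mp hx

theorem ContinuousLinearMap.add_eq_sub_one_of_reduced_resolvents {R M : Type*} [Ring R]
    [TopologicalSpace M] [AddCommGroup M] [IsTopologicalAddGroup M] [Module R M]
    {A P T T' : M →L[R] M} (hP : IsIdempotentElem P)
    (hran : LinearMap.range (P : M →ₗ[R] M) = LinearMap.ker ((A - 1 : M →L[R] M) : M →ₗ[R] M))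
    (hPT : P * T = 0) (hPT' : P * T' = 0)
    (hT : (A - 1) * T = 1 - P) (hT' : (1 - A) * T' = A * (1 - P)) :
    T + T' = P - 1 := by
  have hAX : (A - 1) * (T + T' + (1 - P)) = 0 := by
    calc (A - 1) * (T + T' + (1 - P)) = (A - 1) * T - (1 - A) * T' + (A - 1) * (1 - P) := by
          noncomm_ring
      _ = 0 := by rw [hT, hT']; noncomm_ring
  have hPX : P * (T + T' + (1 - P)) = 0 := by
    rw [mul_add, mul_add, hPT, hPT', hP.mul_one_sub_self, add_zero, add_zero]
  have hX := (mul_eq_self_of_range_eq_ker hP hran hAX).symm.trans hPX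
  linear_combination (norm := abel) hX

theorem IsStarProjection.one_sub_mul_mul_eq_zero {E : Type*} [NormedRing E] [StarRing E]
    [CStarRing E] {P A : E} (hP : IsStarProjection P) (hA : IsSelfAdjoint A)
    (h : P * A * (1 - P) * A * P = 0) : (1 - P) * A * P = 0 := by
  rw [← CStarRing.star_mul_self_eq_zero_iff, ← h]
  simp only [star_mul, hP.isSelfAdjoint.star_eq, hA.star_eq, hP.one_sub.isSelfAdjoint.star_eq]
  calc P * (A * (1 - P)) * ((1 - P) * A * P) = P * A * ((1 - P) * (1 - P)) * A * P := by
        noncomm_ring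
    _ = P * A * (1 - P) * A * P := by rw [hP.one_sub.isIdempotentElem.eq]

theorem vanishing_residues_eigenspace_invariant_general
    {H : Type*} [NormedAddCommGroup H] [InnerProductSpace ℂ H] [CompleteSpace H]
    (A₁ A₂ : H →L[ℂ] H) (hA₂ : IsSelfAdjoint A₂)
    (P : H →L[ℂ] H) (hPidem : P ∘L P = P) (hPsa : IsSelfAdjoint P)
    (hPran : LinearMap.range (P : H →ₗ[ℂ] H) = LinearMap.ker ((A₁ - 1 : H →L[ℂ] H) : H →ₗ[ℂ] H))
    (T T' : H →L[ℂ] H)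
    (hPT : P ∘L T = 0)
    (hPT' : P ∘L T' = 0)
    (hT : (A₁ - 1) ∘L T = 1 - P)
    (hT' : (1 - A₁) ∘L T' = A₁ ∘L (1 - P))
    (hres1 : P ∘L A₂ ∘L T ∘L A₂ ∘L P = 0)
    (hres2 : P ∘L A₂ ∘L T' ∘L A₂ ∘L P = 0) :
    ∀ v ∈ LinearMap.ker ((A₁ - 1 : H →L[ℂ] H) : H →ₗ[ℂ] H), A₂ v ∈ LinearMap.ker ((A₁ - 1 : H →L[ℂ] H) : H →ₗ[ℂ] H) := by
  simp only [← ContinuousLinearMap.mul_def] at hPidem hPT hPT' hT hT' hres1 hres2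
  have hsum : T + T' = P - 1 :=
    ContinuousLinearMap.add_eq_sub_one_of_reduced_resolvents hPidem hPran hPT hPT' hT hT'
  have hcompress : P * A₂ * (1 - P) * A₂ * P = 0 := by
    calc P * A₂ * (1 - P) * A₂ * P
        = -(P * (A₂ * (T * (A₂ * P)))) - P * (A₂ * (T' * (A₂ * P))) := by
          rw [← neg_sub, ← hsum]; noncomm_ring
      _ = 0 := by rw [hres1, hres2, neg_zero, sub_zero]
  have hinvariant : (1 - P) * A₂ * P = 0 :=
    IsStarProjection.one_sub_mul_mul_eq_zero ⟨hPidem, hPsa⟩ hA₂ hcompress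
  rw [← hPran]
  rintro _ ⟨w, rfl⟩
  refine ⟨A₂ (P w), ?_⟩
  have h : A₂ (P w) - P (A₂ (P w)) = 0 := by simpa using congr($hinvariant w)
  exact (sub_eq_zero.mp h).symm

/-- Let `A₁, A₂` be bounded self-adjoint operators with `A₁` invertible and `1`
an isolated eigenvalue of `A₁`.  Let `P` be the orthogonal projection onto
`ker (A₁ - I)`, and let `T = ∫_{σ(A₁)∖{1}} (z-1)⁻¹ dE(z)` and
`T̃ = ∫_{σ(A₁)∖{1}} z (1-z)⁻¹ dE(z)` be the operators from the functional
calculus of `A₁` (characterized here by: they are self-adjoint, commute with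
`A₁`, vanish on the range of `P`, have range orthogonal to the range of `P`,
and satisfy `(A₁ - 1) T = 1 - P` and `(1 - A₁) T̃ = A₁ (1 - P)`).  If
`P A₂ T A₂ P = 0` and `P A₂ T̃ A₂ P = 0`, then `ker (A₁ - I)` is invariant
under `A₂`. -/
theorem vanishing_residues_eigenspace_invariant
    {H : Type*} [NormedAddCommGroup H] [InnerProductSpace ℂ H] [CompleteSpace H]
    (A₁ A₂ : H →L[ℂ] H) (hA₁ : IsSelfAdjoint A₁) (hA₂ : IsSelfAdjoint A₂)
    (hA₁inv : IsUnit A₁)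
    (heig : LinearMap.ker ((A₁ - 1 : H →L[ℂ] H) : H →ₗ[ℂ] H) ≠ ⊥)
    (hisol : ∃ U : Set ℂ, IsOpen U ∧ U ∩ spectrum ℂ A₁ = {1})
    (P : H →L[ℂ] H) (hPidem : P ∘L P = P) (hPsa : IsSelfAdjoint P)
    (hPran : LinearMap.range (P : H →ₗ[ℂ] H) = LinearMap.ker ((A₁ - 1 : H →L[ℂ] H) : H →ₗ[ℂ] H))
    (T T' : H →L[ℂ] H) (hTsa : IsSelfAdjoint T) (hT'sa : IsSelfAdjoint T')
    (hTcomm : T ∘L A₁ = A₁ ∘L T) (hT'comm : T' ∘L A₁ = A₁ ∘L T')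
    (hTP : T ∘L P = 0) (hPT : P ∘L T = 0)
    (hT'P : T' ∘L P = 0) (hPT' : P ∘L T' = 0)
    (hT : (A₁ - 1) ∘L T = 1 - P)
    (hT' : (1 - A₁) ∘L T' = A₁ ∘L (1 - P))
    (hres1 : P ∘L A₂ ∘L T ∘L A₂ ∘L P = 0)
    (hres2 : P ∘L A₂ ∘L T' ∘L A₂ ∘L P = 0) :
    ∀ v ∈ LinearMap.ker ((A₁ - 1 : H →L[ℂ] H) : H →ₗ[ℂ] H), A₂ v ∈ LinearMap.ker ((A₁ - 1 : H →L[ℂ] H) : H →ₗ[ℂ] H) :=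
  vanishing_residues_eigenspace_invariant_general A₁ A₂ hA₂ P hPidem hPsa hPran T T' hPT hPT' hT hT'
    hres1 hres2
end
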